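/- Let k be a field, B = kQ/I a bound quiver algebra, and F a set of new arrows with no relative cycles. Viewing B_F as a B-bimodule via the inclusion B ⊆ B_F, the map H_1(B, B) → H_1(B, B_F) induced by the inclusion of B-bimodules B ⊆ B_F is an isomorphism; that is, H_1(B, B_F) ≅ HH_1(B). -/

import Mathlib

/-
  Formalization of statements from:
  "The first Hochschild (co)homology when adding arrows to a bound quiver algebra"
  by C. Cibils, M. Lanzilotta, E. N. Marcos, S. Schroll, A. Solotar.
-/

set_option linter.unusedSectionVars false
set_option linter.unusedVariables false
set_option maxSynthPendingDepth 3

open CategoryTheory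

noncomputable section

namespace QP

open MulOpposite

/-- The defining relations of the path algebra of the quiver with vertex set `V`,
arrow set `E`, source map `s` and target map `t`, as a quotient of the free algebra
on `V ⊕ E`: the vertices form a complete set of orthogonal idempotents and each arrow `a`
satisfies `t(a)·a = a = a·s(a)`. -/
inductive PRel (k V E : Type) [CommRing k] [Fintype V] [DecidableEq V] (s t : E → V) :
    FreeAlgebra k (V ⊕ E) → FreeAlgebra k (V ⊕ E) → Prop
  | idem (i j : V) : PRel k V E s t
      (FreeAlgebra.ι k (Sum.inl i) * FreeAlgebra.ι k (Sum.inl j))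
      (if i = j then FreeAlgebra.ι k (Sum.inl i) else 0)
  | unit : PRel k V E s t (∑ i : V, FreeAlgebra.ι k (Sum.inl i)) 1
  | arrow_left (a : E) : PRel k V E s t
      (FreeAlgebra.ι k (Sum.inl (t a)) * FreeAlgebra.ι k (Sum.inr a))
      (FreeAlgebra.ι k (Sum.inr a))
  | arrow_right (a : E) : PRel k V E s t
      (FreeAlgebra.ι k (Sum.inr a) * FreeAlgebra.ι k (Sum.inl (s a)))
      (FreeAlgebra.ι k (Sum.inr a))

/-- The path algebra `kQ` of the finite quiver `Q = (V, E, s, t)`. -/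
abbrev PathAlg (k V E : Type) [CommRing k] [Fintype V] [DecidableEq V] (s t : E → V) : Type :=
  RingQuot (PRel k V E s t)

variable (k : Type) [CommRing k]
variable {V E : Type} [Fintype V] [DecidableEq V]

/-- The vertex `i`, as an element of the path algebra (an idempotent). -/
def vtx (s t : E → V) (i : V) : PathAlg k V E s t :=
  RingQuot.mkAlgHom k (PRel k V E s t) (FreeAlgebra.ι k (Sum.inl i))

/-- The arrow `a`, as an element of the path algebra. -/
def arr (s t : E → V) (a : E) : PathAlg k V E s t :=
  RingQuot.mkAlgHom k (PRel k V E s t) (FreeAlgebra.ι k (Sum.inr a))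

/-- A list of arrows `[aₙ, ..., a₁]` is composable when `s aᵢ₊₁ = t aᵢ` for all `i`. -/
def Composable (s t : E → V) : List E → Prop :=
  List.Chain' (fun p q => s p = t q)

/-- The product `aₙ ⋯ a₁` in the path algebra of a list of arrows `[aₙ, ..., a₁]`;
for a composable list this is the corresponding path. -/
def pathProd (s t : E → V) (l : List E) : PathAlg k V E s t :=
  (l.map (arr k s t)).prod

/-- The two-sided ideal of the path algebra generated by the paths of length `m`. -/
def pathsIdeal (s t : E → V) (m : ℕ) : TwoSidedIdeal (PathAlg k V E s t) :=
  TwoSidedIdeal.span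
    {x | ∃ l : List E, l.length = m ∧ Composable s t l ∧ x = pathProd k s t l}

/-- A two-sided ideal `I` of the path algebra is admissible when
`⟨Q_n⟩ ⊆ I ⊆ ⟨Q_2⟩` for some `n ≥ 2`. -/
def IsAdmissible (s t : E → V) (I : TwoSidedIdeal (PathAlg k V E s t)) : Prop :=
  ∃ n : ℕ, 2 ≤ n ∧ pathsIdeal k s t n ≤ I ∧ I ≤ pathsIdeal k s t 2

/-- The bound quiver algebra `kQ/I`. -/
abbrev BQA (s t : E → V) (I : TwoSidedIdeal (PathAlg k V E s t)) : Type :=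
  RingQuot (fun x y : PathAlg k V E s t => x - y ∈ I)

/-- The quotient map `kQ → kQ/I`. -/
def bqaMk (s t : E → V) (I : TwoSidedIdeal (PathAlg k V E s t)) :
    PathAlg k V E s t →ₐ[k] BQA k s t I :=
  RingQuot.mkAlgHom k _

/-- The image of a vertex in the bound quiver algebra. -/
def bv (s t : E → V) (I : TwoSidedIdeal (PathAlg k V E s t)) (i : V) : BQA k s t I :=
  bqaMk k s t I (vtx k s t i)

/-- The subspace `e·A·f` of an algebra `A`, for elements `e f : A`
(typically idempotents). -/
def corner (A : Type) [Ring A] [Algebra k A] (e f : A) : Submodule k A :=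
  Submodule.span k {x | ∃ c : A, x = e * c * f}

/-- `yBx ≠ 0`, for vertices `y x` of the quiver of the bound quiver algebra `B = kQ/I`. -/
def cornerNZ (s t : E → V) (I : TwoSidedIdeal (PathAlg k V E s t)) (y x : V) : Prop :=
  corner k (BQA k s t I) (bv k s t I y) (bv k s t I x) ≠ ⊥

section NewArrows

variable (s t : E → V) {F : Type} [Fintype F] (sF tF : F → V)
variable (I : TwoSidedIdeal (PathAlg k V E s t))

/-- A relative path `(aₙ, ..., a₁)` (recorded as the list `[aₙ, ..., a₁]` of new arrows):
a nonempty sequence of new arrows such that `s(aᵢ₊₁)·B·t(aᵢ) ≠ 0` for all `i`. -/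
def IsRelPath (l : List F) : Prop :=
  l ≠ [] ∧ l.Chain' (fun p q => cornerNZ k s t I (sF p) (tF q))

/-- The source of a relative path: the source of its first arrow `a₁`. -/
def relSource (l : List F) (h : l ≠ []) : V := sF (l.getLast h)

/-- The target of a relative path: the target of its last arrow `aₙ`. -/
def relTarget (l : List F) (h : l ≠ []) : V := tF (l.head h)

/-- The dimension of a relative path `γ = (aₙ, ..., a₁)`:
`∏ᵢ dim_k s(aᵢ₊₁)·B·t(aᵢ)`. -/
def relDim (l : List F) : ℕ :=
  ((l.zip l.tail).map fun pq =>
    Module.finrank k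
      (corner k (BQA k s t I) (bv k s t I (sF pq.1)) (bv k s t I (tF pq.2)))).prod

/-- A relative cycle: a relative path `γ` with `s(γ)·B·t(γ) ≠ 0`. -/
def IsRelCycle (l : List F) : Prop :=
  ∃ h : IsRelPath k s t sF tF I l,
    cornerNZ k s t I (relSource sF l h.1) (relTarget tF l h.1)

/-- There are no relative cycles. -/
def NoRelCycles : Prop := ∀ l : List F, ¬ IsRelCycle k s t sF tF I l

/-- The type of relative paths. -/
def RelPathT : Type := {l : List F // IsRelPath k s t sF tF I l}

/-- An extended relative path: either a pair of vertices `(y, x)` with `yBx ≠ 0`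
(length 0, recorded as `(y, [], x)`), or a triple `(y, γ, x)` with `γ` a relative path,
`y·B·t(γ) ≠ 0` and `s(γ)·B·x ≠ 0`. -/
def IsExtRelPath : V × List F × V → Prop
  | (y, [], x) => cornerNZ k s t I y x
  | (y, a :: l, x) =>
      IsRelPath k s t sF tF I (a :: l) ∧
      cornerNZ k s t I y (relTarget tF (a :: l) (List.cons_ne_nil a l)) ∧
      cornerNZ k s t I (relSource sF (a :: l) (List.cons_ne_nil a l)) x

/-- The dimension of an extended relative path. -/
def extDim : V × List F × V → ℕ
  | (y, [], x) => Module.finrank k (corner k (BQA k s t I) (bv k s t I y) (bv k s t I x))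
  | (y, a :: l, x) =>
      Module.finrank k (corner k (BQA k s t I) (bv k s t I y)
          (bv k s t I (relTarget tF (a :: l) (List.cons_ne_nil a l)))) *
        relDim k s t sF tF I (a :: l) *
        Module.finrank k (corner k (BQA k s t I)
          (bv k s t I (relSource sF (a :: l) (List.cons_ne_nil a l))) (bv k s t I x))

/-- The source of an extended relative path `(y, γ, x)` is `x`. -/
def extSource (w : V × List F × V) : V := w.2.2

/-- The target of an extended relative path `(y, γ, x)` is `y`. -/
def extTarget (w : V × List F × V) : V := w.1

/-- The set `F ∥ W⋆` of pairs `(a, ω)` of a new arrow `a` and an extended relative path `ω`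
which is parallel to `a`, i.e. `s(a) = s(ω)` and `t(a) = t(ω)`. -/
def FparW : Type :=
  {p : F × (V × List F × V) //
    IsExtRelPath k s t sF tF I p.2 ∧ sF p.1 = extSource p.2 ∧ tF p.1 = extTarget p.2}

/-- The quiver `Q_F` obtained by adding the new arrows `F` has arrow set `E ⊕ F`,
source map `Sum.elim s sF` and target map `Sum.elim t tF`.  This is the canonical
algebra morphism `kQ → kQ_F`. -/
def extendPath : PathAlg k V E s t →ₐ[k] PathAlg k V (E ⊕ F) (Sum.elim s sF) (Sum.elim t tF) :=
  RingQuot.liftAlgHom k ⟨FreeAlgebra.lift k (fun x => match x with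
      | Sum.inl i => RingQuot.mkAlgHom k (PRel k V (E ⊕ F) (Sum.elim s sF) (Sum.elim t tF))
          (FreeAlgebra.ι k (Sum.inl i))
      | Sum.inr a => RingQuot.mkAlgHom k (PRel k V (E ⊕ F) (Sum.elim s sF) (Sum.elim t tF))
          (FreeAlgebra.ι k (Sum.inr (Sum.inl a)))), by
    intro x y h
    induction h with
    | idem i j =>
        have h2 := RingQuot.mkAlgHom_rel k
          (PRel.idem (k := k) (s := Sum.elim s sF) (t := Sum.elim t tF) i j)
        simp only [map_mul, apply_ite, map_zero, FreeAlgebra.lift_ι_apply] at h2 ⊢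
        exact h2
    | unit =>
        have h2 := RingQuot.mkAlgHom_rel k
          (PRel.unit (k := k) (V := V) (E := E ⊕ F) (s := Sum.elim s sF) (t := Sum.elim t tF))
        simp only [map_sum, map_one, FreeAlgebra.lift_ι_apply] at h2 ⊢
        exact h2
    | arrow_left a =>
        have h2 := RingQuot.mkAlgHom_rel k
          (PRel.arrow_left (k := k) (s := Sum.elim s sF) (t := Sum.elim t tF) (Sum.inl a))
        simp only [map_mul, FreeAlgebra.lift_ι_apply, Sum.elim_inl] at h2 ⊢
        exact h2
    | arrow_right a =>
        have h2 := RingQuot.mkAlgHom_rel k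
          (PRel.arrow_right (k := k) (s := Sum.elim s sF) (t := Sum.elim t tF) (Sum.inl a))
        simp only [map_mul, FreeAlgebra.lift_ι_apply, Sum.elim_inl] at h2 ⊢
        exact h2⟩

/-- The two-sided ideal `⟨I⟩` of `kQ_F` generated by (the image of) `I`. -/
def idealF : TwoSidedIdeal (PathAlg k V (E ⊕ F) (Sum.elim s sF) (Sum.elim t tF)) :=
  TwoSidedIdeal.span (extendPath k s t sF tF '' (I : Set (PathAlg k V E s t)))

/-- The algebra `B_F = kQ_F/⟨I⟩`. -/
abbrev BQAF : Type := BQA k (Sum.elim s sF) (Sum.elim t tF) (idealF k s t sF tF I)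

/-- The canonical inclusion `B = kQ/I → B_F = kQ_F/⟨I⟩`. -/
def inclBF : BQA k s t I →ₐ[k] BQAF k s t sF tF I :=
  RingQuot.liftAlgHom k
    ⟨(bqaMk k (Sum.elim s sF) (Sum.elim t tF) (idealF k s t sF tF I)).comp
        (extendPath k s t sF tF), by
      intro x y h
      exact RingQuot.mkAlgHom_rel k (by
        show _ - _ ∈ idealF k s t sF tF I
        rw [← map_sub]
        exact TwoSidedIdeal.subset_span ⟨x - y, h, rfl⟩)⟩

end NewArrows

end QP

namespace HHlow

open scoped TensorProduct
open TensorProduct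

section Homology

variable (k : Type) [CommRing k]
variable (A : Type) [Ring A] [Algebra k A]
variable (Y : Type) [AddCommGroup Y] [Module k Y]
  [Module A Y] [Module Aᵐᵒᵖ Y]
  [SMulCommClass k A Y] [SMulCommClass k Aᵐᵒᵖ Y]
  [IsScalarTower k A Y] [IsScalarTower k Aᵐᵒᵖ Y]
  [SMulCommClass A Aᵐᵒᵖ Y]
variable {B : Type} [Ring B] [Algebra k B]

/-- The Hochschild boundary `b₁ : Y ⊗ B → Y`, `y ⊗ b ↦ y·b - b·y`, where `B` acts on the
`A`-bimodule `Y` through the algebra morphism `f : B →ₐ[k] A`. -/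
noncomputable def hb1 (f : B →ₐ[k] A) : Y ⊗[k] B →ₗ[k] Y :=
  TensorProduct.lift (LinearMap.mk₂ k
    (fun y b => MulOpposite.op (f b) • y - f b • y)
    (by intro y z b; simp only [smul_add]; abel)
    (by intro c y b; simp only [smul_sub, smul_comm c])
    (by intro y b b'; simp only [map_add, MulOpposite.op_add, add_smul]; abel)
    (by intro c y b; simp only [map_smul, MulOpposite.op_smul, smul_assoc, smul_sub]))

lemma hb1_tmul (f : B →ₐ[k] A) (y : Y) (b : B) :
    hb1 k A Y f (y ⊗ₜ[k] b) = MulOpposite.op (f b) • y - f b • y := by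
  simp [hb1]

/-- The Hochschild boundary `b₂ : (Y ⊗ B) ⊗ B → Y ⊗ B`,
`(y ⊗ b) ⊗ b' ↦ (y·b) ⊗ b' - y ⊗ (b·b') + (b'·y) ⊗ b`. -/
noncomputable def hb2 (f : B →ₐ[k] A) : (Y ⊗[k] B) ⊗[k] B →ₗ[k] Y ⊗[k] B :=
  TensorProduct.lift (TensorProduct.lift
    { toFun := fun y => LinearMap.mk₂ k
        (fun b b' => (MulOpposite.op (f b) • y) ⊗ₜ[k] b' - y ⊗ₜ[k] (b * b')
          + (f b' • y) ⊗ₜ[k] b)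
        (by
          intro b c b'
          simp only [map_add, MulOpposite.op_add, add_smul, add_tmul, add_mul, tmul_add]
          abel)
        (by
          intro c b b'
          simp only [map_smul, MulOpposite.op_smul, smul_assoc, smul_tmul', tmul_smul,
            smul_mul_assoc, smul_sub, smul_add])
        (by
          intro b b' c'
          simp only [map_add, add_smul, add_tmul, mul_add, tmul_add]
          abel)
        (by
          intro c b b'
          simp only [map_smul, smul_assoc, smul_tmul', tmul_smul, mul_smul_comm,
            smul_sub, smul_add])
      map_add' := by
        intro y z
        ext b b'
        simp only [LinearMap.mk₂_apply, LinearMap.add_apply, LinearMap.coe_mk, AddHom.coe_mk,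
          smul_add, add_tmul, tmul_add]
        abel
      map_smul' := by
        intro c y
        ext b b'
        simp only [LinearMap.mk₂_apply, LinearMap.smul_apply, RingHom.id_apply,
          LinearMap.coe_mk, AddHom.coe_mk, smul_sub, smul_add, smul_tmul',
          smul_comm c] })

lemma hb2_tmul (f : B →ₐ[k] A) (y : Y) (b b' : B) :
    hb2 k A Y f ((y ⊗ₜ[k] b) ⊗ₜ[k] b') =
      (MulOpposite.op (f b) • y) ⊗ₜ[k] b' - y ⊗ₜ[k] (b * b') + (f b' • y) ⊗ₜ[k] b := by
  simp [hb2]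

/-- The first Hochschild homology `H_1(B, Y)` of `B` with coefficients in the `A`-bimodule
`Y`, `B` acting through `f : B →ₐ[k] A`: the homology of
`Y ⊗ B ⊗ B → Y ⊗ B → Y` at `Y ⊗ B`. -/
noncomputable def H1h (f : B →ₐ[k] A) :=
  LinearMap.ker (hb1 k A Y f) ⧸
    (LinearMap.range (hb2 k A Y f)).comap (LinearMap.ker (hb1 k A Y f)).subtype

noncomputable instance (f : B →ₐ[k] A) : AddCommGroup (H1h k A Y f) :=
  inferInstanceAs (AddCommGroup (_ ⧸ _))

noncomputable instance (f : B →ₐ[k] A) : Module k (H1h k A Y f) :=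
  inferInstanceAs (Module k (_ ⧸ _))

end Homology

section Functorial

variable (k : Type) [CommRing k]
variable (A : Type) [Ring A] [Algebra k A]
variable (Y : Type) [AddCommGroup Y] [Module k Y]
  [Module A Y] [Module Aᵐᵒᵖ Y]
  [SMulCommClass k A Y] [SMulCommClass k Aᵐᵒᵖ Y]
  [IsScalarTower k A Y] [IsScalarTower k Aᵐᵒᵖ Y]
  [SMulCommClass A Aᵐᵒᵖ Y]
variable (A' : Type) [Ring A'] [Algebra k A']
variable (Y' : Type) [AddCommGroup Y'] [Module k Y']
  [Module A' Y'] [Module A'ᵐᵒᵖ Y']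
  [SMulCommClass k A' Y'] [SMulCommClass k A'ᵐᵒᵖ Y']
  [IsScalarTower k A' Y'] [IsScalarTower k A'ᵐᵒᵖ Y']
  [SMulCommClass A' A'ᵐᵒᵖ Y']
variable {B B' : Type} [Ring B] [Algebra k B] [Ring B'] [Algebra k B']
variable (f : B →ₐ[k] A) (f' : B' →ₐ[k] A') (g : B →ₐ[k] B') (u : Y →ₗ[k] Y')

/-- The chain map `Y ⊗ B → Y' ⊗ B'` induced by `g` and `u`. -/
noncomputable def chain1 : Y ⊗[k] B →ₗ[k] Y' ⊗[k] B' :=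
  TensorProduct.map u (g.toLinearMap : B →ₗ[k] B')

lemma chain1_comm
    (hl : ∀ (b : B) (y : Y), u (f b • y) = f' (g b) • u y)
    (hr : ∀ (b : B) (y : Y), u (MulOpposite.op (f b) • y) = MulOpposite.op (f' (g b)) • u y) :
    (hb1 k A' Y' f').comp (chain1 k Y Y' g u) = u.comp (hb1 k A Y f) := by
  apply TensorProduct.ext'
  intro y b
  simp [chain1, hb1_tmul, map_sub, hl, hr]

lemma chain2_comm
    (hl : ∀ (b : B) (y : Y), u (f b • y) = f' (g b) • u y)
    (hr : ∀ (b : B) (y : Y), u (MulOpposite.op (f b) • y) = MulOpposite.op (f' (g b)) • u y) :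
    (chain1 k Y Y' g u).comp (hb2 k A Y f) =
      (hb2 k A' Y' f').comp (TensorProduct.map (chain1 k Y Y' g u) g.toLinearMap) := by
  apply TensorProduct.ext'
  intro x b'
  induction x using TensorProduct.induction_on with
  | zero => simp
  | tmul y b =>
      simp only [LinearMap.comp_apply, TensorProduct.map_tmul, hb2_tmul, chain1, map_sub,
        map_add, TensorProduct.map_tmul, AlgHom.toLinearMap_apply, map_mul, hl, hr]
  | add v w hv hw =>
      simp only [TensorProduct.add_tmul, map_add] at *
      rw [hv, hw]

/-- The map `H_1(B, Y) → H_1(B', Y')` induced by the compatible pair `(g, u)`. -/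
noncomputable def H1hMap
    (hl : ∀ (b : B) (y : Y), u (f b • y) = f' (g b) • u y)
    (hr : ∀ (b : B) (y : Y), u (MulOpposite.op (f b) • y) = MulOpposite.op (f' (g b)) • u y) :
    H1h k A Y f →ₗ[k] H1h k A' Y' f' :=
  Submodule.mapQ _ _
    ((chain1 k Y Y' g u).restrict (p := LinearMap.ker (hb1 k A Y f))
      (q := LinearMap.ker (hb1 k A' Y' f')) (by
        intro x hx
        have h := LinearMap.congr_fun (chain1_comm k A Y A' Y' f f' g u hl hr) x
        simp only [LinearMap.comp_apply] at h
        simp only [LinearMap.mem_ker] at hx ⊢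
        rw [h, hx, map_zero]))
    (by
      rintro ⟨x, hx⟩ ⟨z, hz⟩
      refine ⟨TensorProduct.map (chain1 k Y Y' g u) g.toLinearMap z, ?_⟩
      have h := LinearMap.congr_fun (chain2_comm k A Y A' Y' f f' g u hl hr) z
      simp only [LinearMap.comp_apply] at h
      rw [← h, hz]
      rfl)

end Functorial

end HHlow

/-!
The inclusion `i : B → B_F` has an algebra retraction `r` killing the new arrows, and a
derivation `D : B_F → B_F ⊗ B` (for the left action of `B_F` and the right action of `B`
through `r`) that vanishes on `B`, sends a new arrow `a` to `a ⊗ e_{s(a)}`, and satisfies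
`μ ∘ D = id - i ∘ r` for the multiplication `μ (y ⊗ b) = y · i(b)`.
Then `r ⊗ id` retracts the chain map `i ⊗ id : B ⊗ B → B_F ⊗ B`, and `D ⊗ id` is a homotopy
`b₂ ∘ (D ⊗ id) = id - (i r ⊗ id) - D ∘ b₁`, so on `H₁` the map induced by `i` is injective and
surjective.
-/

open scoped TensorProduct
open TensorProduct

namespace HHlow

section Functorial

variable {k : Type} [CommRing k]
variable {A : Type} [Ring A] [Algebra k A]
variable {Y : Type} [AddCommGroup Y] [Module k Y]
  [Module A Y] [Module Aᵐᵒᵖ Y]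
  [SMulCommClass k A Y] [SMulCommClass k Aᵐᵒᵖ Y]
  [IsScalarTower k A Y] [IsScalarTower k Aᵐᵒᵖ Y]
  [SMulCommClass A Aᵐᵒᵖ Y]
variable {A' : Type} [Ring A'] [Algebra k A']
variable {Y' : Type} [AddCommGroup Y'] [Module k Y']
  [Module A' Y'] [Module A'ᵐᵒᵖ Y']
  [SMulCommClass k A' Y'] [SMulCommClass k A'ᵐᵒᵖ Y']
  [IsScalarTower k A' Y'] [IsScalarTower k A'ᵐᵒᵖ Y']
  [SMulCommClass A' A'ᵐᵒᵖ Y']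
variable {B B' : Type} [Ring B] [Algebra k B] [Ring B'] [Algebra k B']
variable {f : B →ₐ[k] A} {f' : B' →ₐ[k] A'} {g : B →ₐ[k] B'} {u : Y →ₗ[k] Y'}

theorem H1hMap_leftInverse {g' : B' →ₐ[k] B} {u' : Y' →ₗ[k] Y}
    (hl : ∀ (b : B) (y : Y), u (f b • y) = f' (g b) • u y)
    (hr : ∀ (b : B) (y : Y), u (MulOpposite.op (f b) • y) = MulOpposite.op (f' (g b)) • u y)
    (hl' : ∀ (b : B') (y : Y'), u' (f' b • y) = f (g' b) • u' y)
    (hr' : ∀ (b : B') (y : Y'),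
      u' (MulOpposite.op (f' b) • y) = MulOpposite.op (f (g' b)) • u' y)
    (hg : ∀ b, g' (g b) = b) (hu : ∀ y, u' (u y) = y) :
    Function.LeftInverse (H1hMap k A' Y' A Y f' f g' u' hl' hr')
      (H1hMap k A Y A' Y' f f' g u hl hr) := by
  intro x
  induction x using Submodule.Quotient.induction_on with | _ z
  have hz : chain1 k Y' Y g' u' (chain1 k Y Y' g u z) = z := by
    induction (z : Y ⊗[k] B) using TensorProduct.induction_on with
    | zero => simp
    | tmul y b => simp [chain1, hg, hu]
    | add v w hv hw => rw [map_add, map_add, hv, hw]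
  exact congrArg Submodule.Quotient.mk (Subtype.ext hz)

theorem H1hMap_surjective_of_homotopy
    (hl : ∀ (b : B) (y : Y), u (f b • y) = f' (g b) • u y)
    (hr : ∀ (b : B) (y : Y), u (MulOpposite.op (f b) • y) = MulOpposite.op (f' (g b)) • u y)
    (ρ : Y' ⊗[k] B' →ₗ[k] Y ⊗[k] B) (hρ : ∀ z, hb1 k A' Y' f' z = 0 → hb1 k A Y f (ρ z) = 0)
    (h : Y' ⊗[k] B' →ₗ[k] (Y' ⊗[k] B') ⊗[k] B') (σ : Y' →ₗ[k] Y' ⊗[k] B')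
    (hh : ∀ z, hb2 k A' Y' f' (h z) = z - chain1 k Y Y' g u (ρ z) - σ (hb1 k A' Y' f' z)) :
    Function.Surjective (H1hMap k A Y A' Y' f f' g u hl hr) := by
  intro x
  induction x using Submodule.Quotient.induction_on with | _ z
  refine ⟨Submodule.Quotient.mk ⟨ρ z, hρ z z.2⟩, (Submodule.Quotient.eq _).2 ⟨-h z, ?_⟩⟩
  have hz : hb1 k A' Y' f' z = 0 := z.2
  rw [map_neg, hh, hz, map_zero, sub_zero, neg_sub]
  rfl

end Functorial

section Splitting

variable {k B C : Type} [CommRing k] [Ring B] [Algebra k B] [Ring C] [Algebra k C]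
variable (i : B →ₐ[k] C)

def mulIncl : C ⊗[k] B →ₗ[k] C :=
  LinearMap.mul' k C ∘ₗ LinearMap.lTensor C i.toLinearMap

@[simp]
theorem mulIncl_tmul (y : C) (b : B) : mulIncl i (y ⊗ₜ b) = y * i b := rfl

theorem mulIncl_tmul_one_mul (x : C) (n : C ⊗[k] B) :
    mulIncl i ((x ⊗ₜ 1) * n) = x * mulIncl i n := by
  induction n using TensorProduct.induction_on with
  | zero => simp
  | tmul y b => simp [mul_assoc]
  | add m n hm hn => rw [mul_add, map_add, hm, hn, map_add, mul_add]

theorem mulIncl_mul_one_tmul (n : C ⊗[k] B) (c : B) :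
    mulIncl i (n * (1 ⊗ₜ c)) = mulIncl i n * i c := by
  induction n using TensorProduct.induction_on with
  | zero => simp
  | tmul y b => simp [mul_assoc]
  | add m n hm hn => rw [add_mul, map_add, hm, hn, map_add, add_mul]

theorem hb2_tmul_eq (n : C ⊗[k] B) (c : B) :
    hb2 k C C i (n ⊗ₜ c) = mulIncl i n ⊗ₜ c - n * (1 ⊗ₜ c) + (i c ⊗ₜ 1) * n := by
  induction n using TensorProduct.induction_on with
  | zero => simp
  | tmul y b => simp [hb2_tmul, MulOpposite.smul_eq_mul_unop]
  | add m n hm hn =>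
    rw [add_tmul, map_add, hm, hn, map_add, add_tmul, add_mul, mul_add]
    abel

variable {i} {r : C →ₐ[k] B} {D : C →ₗ[k] C ⊗[k] B}

theorem hb2_rTensor_eq (hri : ∀ b, r (i b) = b) (hDi : ∀ b, D (i b) = 0)
    (hD : ∀ x y, D (x * y) = (x ⊗ₜ 1) * D y + D x * (1 ⊗ₜ r y))
    (hμD : ∀ y, mulIncl i (D y) = y - i (r y)) (z : C ⊗[k] B) :
    hb2 k C C i (LinearMap.rTensor B D z) =
      z - TensorProduct.map (i.toLinearMap ∘ₗ r.toLinearMap) LinearMap.id z -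
        D (hb1 k C C i z) := by
  induction z using TensorProduct.induction_on with
  | zero => simp
  | tmul y c =>
    have hDl : D (i c * y) = (i c ⊗ₜ 1) * D y := by rw [hD, hDi, zero_mul, add_zero]
    have hDr : D (y * i c) = D y * (1 ⊗ₜ c) := by rw [hD, hDi, hri, mul_zero, zero_add]
    simp only [LinearMap.rTensor_tmul, hb2_tmul_eq, hμD, hb1_tmul, map_sub, hDl, hDr,
      MulOpposite.smul_eq_mul_unop, MulOpposite.unop_op, smul_eq_mul, sub_tmul, map_tmul,
      LinearMap.coe_comp, AlgHom.coe_toLinearMap, Function.comp_apply, LinearMap.id_coe, id_eq]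
    abel
  | add m n hm hn =>
    simp only [map_add, hm, hn]
    abel

theorem H1hMap_bijective_of_splitting (hri : ∀ b, r (i b) = b) (hDi : ∀ b, D (i b) = 0)
    (hD : ∀ x y, D (x * y) = (x ⊗ₜ 1) * D y + D x * (1 ⊗ₜ r y))
    (hμD : ∀ y, mulIncl i (D y) = y - i (r y))
    (hl : ∀ (b : B) (y : B),
      i.toLinearMap (AlgHom.id k B b • y) = i (AlgHom.id k B b) • i.toLinearMap y)
    (hr : ∀ (b : B) (y : B), i.toLinearMap (MulOpposite.op (AlgHom.id k B b) • y) =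
      MulOpposite.op (i (AlgHom.id k B b)) • i.toLinearMap y) :
    Function.Bijective
      (H1hMap k B B C C (AlgHom.id k B) i (AlgHom.id k B) i.toLinearMap hl hr) := by
  have hl' (b : B) (y : C) :
      r.toLinearMap (i b • y) = AlgHom.id k B (AlgHom.id k B b) • r.toLinearMap y := by
    simp [hri]
  have hr' (b : B) (y : C) : r.toLinearMap (MulOpposite.op (i b) • y) =
      MulOpposite.op (AlgHom.id k B (AlgHom.id k B b)) • r.toLinearMap y := by
    simp [MulOpposite.smul_eq_mul_unop, hri]
  refine ⟨(H1hMap_leftInverse _ _ hl' hr' (fun _ => rfl) (fun _ => hri _)).injective,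
    H1hMap_surjective_of_homotopy _ _ (chain1 k C B (AlgHom.id k B) r.toLinearMap) (fun z hz => ?_)
      (LinearMap.rTensor B D) D (fun z => ?_)⟩
  · rw [← LinearMap.comp_apply, chain1_comm k C C B B i _ _ _ hl' hr', LinearMap.comp_apply, hz,
      map_zero]
  · rw [hb2_rTensor_eq hri hDi hD hμD, chain1, chain1,
      ← LinearMap.comp_apply (TensorProduct.map _ _), ← TensorProduct.map_comp]
    rfl

end Splitting

end HHlow

section TensorBimodule

variable {k C B : Type} [CommRing k] [Ring C] [Algebra k C] [Ring B] [Algebra k B]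

instance : Module (C × B) (C ⊗[k] B) :=
  Module.compHom _
    ((Algebra.TensorProduct.includeLeftRingHom (R := k) (B := B)).comp (RingHom.fst C B))

instance : Module (C × B)ᵐᵒᵖ (C ⊗[k] B) :=
  Module.compHom _ (RingHom.op
    ((Algebra.TensorProduct.includeRight : B →ₐ[k] C ⊗[k] B).toRingHom.comp (RingHom.snd C B)))

theorem TensorProduct.prod_smul_eq (p : C × B) (n : C ⊗[k] B) : p • n = (p.1 ⊗ₜ 1) * n := rfl

theorem TensorProduct.op_prod_smul_eq (p : C × B) (n : C ⊗[k] B) :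
    MulOpposite.op p • n = n * (1 ⊗ₜ p.2) := rfl

instance : SMulCommClass (C × B) (C × B)ᵐᵒᵖ (C ⊗[k] B) where
  smul_comm p q n := (mul_assoc _ _ _).symm

instance : IsScalarTower k (C × B) (C ⊗[k] B) where
  smul_assoc c p n := by
    rw [TensorProduct.prod_smul_eq, TensorProduct.prod_smul_eq, Prod.smul_fst, ← smul_tmul',
      smul_mul_assoc]

instance : IsScalarTower k (C × B)ᵐᵒᵖ (C ⊗[k] B) where
  smul_assoc c q n := by
    rw [← MulOpposite.op_unop q, ← MulOpposite.op_smul, TensorProduct.op_prod_smul_eq,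
      TensorProduct.op_prod_smul_eq, Prod.smul_snd, tmul_smul, mul_smul_comm]


end TensorBimodule

namespace QP

section PathAlgebra

variable (k : Type) [CommRing k] {V E : Type} [Fintype V] [DecidableEq V] (s t : E → V)

theorem vtx_mul_vtx (i j : V) :
    vtx k s t i * vtx k s t j = if i = j then vtx k s t i else 0 := by
  rw [vtx, vtx, ← map_mul, RingQuot.mkAlgHom_rel k (PRel.idem i j)]
  split_ifs <;> simp

theorem sum_vtx : ∑ i, vtx k s t i = 1 := by
  simp only [vtx, ← map_sum, RingQuot.mkAlgHom_rel k (PRel.unit (s := s) (t := t)), map_one]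

theorem vtx_mul_arr (a : E) : vtx k s t (t a) * arr k s t a = arr k s t a := by
  rw [vtx, arr, ← map_mul, RingQuot.mkAlgHom_rel k (PRel.arrow_left a)]

theorem arr_mul_vtx (a : E) : arr k s t a * vtx k s t (s a) = arr k s t a := by
  rw [vtx, arr, ← map_mul, RingQuot.mkAlgHom_rel k (PRel.arrow_right a)]

variable {k s t} {A : Type} [Semiring A] [Algebra k A]

def PathAlg.lift (v : V → A) (x : E → A)
    (h_idem : ∀ i j, v i * v j = if i = j then v i else 0) (h_sum : ∑ i, v i = 1)
    (h_left : ∀ a, v (t a) * x a = x a) (h_right : ∀ a, x a * v (s a) = x a) :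
    PathAlg k V E s t →ₐ[k] A :=
  RingQuot.liftAlgHom k ⟨FreeAlgebra.lift k (Sum.elim v x), fun _ _ h => by
    induction h with
    | idem i j => simpa [apply_ite] using h_idem i j
    | unit => simpa using h_sum
    | arrow_left a => simpa using h_left a
    | arrow_right a => simpa using h_right a⟩

section Lift

variable {v : V → A} {x : E → A} {h_idem : ∀ i j, v i * v j = if i = j then v i else 0}
  {h_sum : ∑ i, v i = 1} {h_left : ∀ a, v (t a) * x a = x a} {h_right : ∀ a, x a * v (s a) = x a}

@[simp]
theorem PathAlg.lift_vtx (i : V) :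
    PathAlg.lift v x h_idem h_sum h_left h_right (vtx k s t i) = v i := by
  simp [PathAlg.lift, vtx]

@[simp]
theorem PathAlg.lift_arr (a : E) :
    PathAlg.lift v x h_idem h_sum h_left h_right (arr k s t a) = x a := by
  simp [PathAlg.lift, arr]

end Lift

theorem PathAlg.hom_ext {f g : PathAlg k V E s t →ₐ[k] A}
    (hv : ∀ i, f (vtx k s t i) = g (vtx k s t i)) (ha : ∀ a, f (arr k s t a) = g (arr k s t a)) :
    f = g := by
  refine RingQuot.ringQuot_ext' _ _ _ (FreeAlgebra.hom_ext (funext ?_))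
  rintro (i | a)
  exacts [hv i, ha a]

end PathAlgebra

section BoundQuiverAlgebra

variable (k : Type) [CommRing k] {V E : Type} [Fintype V] [DecidableEq V] (s t : E → V)
variable (I : TwoSidedIdeal (PathAlg k V E s t))

def ba (a : E) : BQA k s t I := bqaMk k s t I (arr k s t a)

theorem bv_mul_bv (i j : V) :
    bv k s t I i * bv k s t I j = if i = j then bv k s t I i else 0 := by
  rw [bv, bv, ← map_mul, vtx_mul_vtx, apply_ite (bqaMk k s t I), map_zero]

theorem sum_bv : ∑ i, bv k s t I i = 1 := by
  simp only [bv, ← map_sum, sum_vtx, map_one]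

theorem bv_mul_ba (a : E) : bv k s t I (t a) * ba k s t I a = ba k s t I a := by
  rw [bv, ba, ← map_mul, vtx_mul_arr]

theorem ba_mul_bv (a : E) : ba k s t I a * bv k s t I (s a) = ba k s t I a := by
  rw [bv, ba, ← map_mul, arr_mul_vtx]

variable {k s t I}

theorem bqaMk_eq_zero {x : PathAlg k V E s t} (hx : x ∈ I) : bqaMk k s t I x = 0 := by
  rw [← map_zero (bqaMk k s t I)]
  exact RingQuot.mkAlgHom_rel k (by rwa [sub_zero])

variable {A : Type} [Ring A] [Algebra k A]

def BQA.lift (f : PathAlg k V E s t →ₐ[k] A) (hf : ∀ x ∈ I, f x = 0) : BQA k s t I →ₐ[k] A :=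
  RingQuot.liftAlgHom k ⟨f, fun x y h => sub_eq_zero.1 (by rw [← map_sub]; exact hf _ h)⟩

@[simp]
theorem BQA.lift_bqaMk (f : PathAlg k V E s t →ₐ[k] A) (hf : ∀ x ∈ I, f x = 0)
    (x : PathAlg k V E s t) : BQA.lift f hf (bqaMk k s t I x) = f x :=
  RingQuot.liftAlgHom_mkAlgHom_apply k f _ x

theorem BQA.hom_ext {f g : BQA k s t I →ₐ[k] A}
    (hv : ∀ i, f (bv k s t I i) = g (bv k s t I i))
    (ha : ∀ a, f (ba k s t I a) = g (ba k s t I a)) :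
    f = g :=
  RingQuot.ringQuot_ext' _ _ _ (PathAlg.hom_ext hv ha)

theorem BQA.induction_on {P : BQA k s t I → Prop} (y : BQA k s t I)
    (algebraMap : ∀ c, P (algebraMap k _ c)) (vertex : ∀ i, P (bv k s t I i))
    (arrow : ∀ a, P (ba k s t I a)) (add : ∀ x y, P x → P y → P (x + y))
    (mul : ∀ x y, P x → P y → P (x * y)) : P y := by
  obtain ⟨p, rfl⟩ := RingQuot.mkAlgHom_surjective k _ y
  obtain ⟨q, rfl⟩ := RingQuot.mkAlgHom_surjective k _ p
  induction q using FreeAlgebra.induction with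
  | grade0 c => simpa only [AlgHom.commutes] using algebraMap c
  | grade1 x => rcases x with i | a; exacts [vertex i, arrow a]
  | mul x y hx hy => simpa only [map_mul] using mul _ _ hx hy
  | add x y hx hy => simpa only [map_add] using add _ _ hx hy

end BoundQuiverAlgebra

section NewArrows

variable {k : Type} [CommRing k] {V E : Type} [Fintype V] [DecidableEq V] {s t : E → V}
  {F : Type} [Fintype F] {sF tF : F → V} {I : TwoSidedIdeal (PathAlg k V E s t)}

theorem extendPath_vtx (i : V) :
    extendPath k s t sF tF (vtx k s t i) = vtx k (Sum.elim s sF) (Sum.elim t tF) i := by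
  simp [extendPath, vtx]

theorem extendPath_arr (e : E) :
    extendPath k s t sF tF (arr k s t e) = arr k (Sum.elim s sF) (Sum.elim t tF) (Sum.inl e) := by
  simp [extendPath, arr]

theorem inclBF_bqaMk (x : PathAlg k V E s t) :
    inclBF k s t sF tF I (bqaMk k s t I x) =
      bqaMk k (Sum.elim s sF) (Sum.elim t tF) (idealF k s t sF tF I) (extendPath k s t sF tF x) :=
  RingQuot.liftAlgHom_mkAlgHom_apply _ _ _ _

theorem inclBF_bv (i : V) :
    inclBF k s t sF tF I (bv k s t I i) =
      bv k (Sum.elim s sF) (Sum.elim t tF) (idealF k s t sF tF I) i := by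
  rw [bv, inclBF_bqaMk, extendPath_vtx, bv]

theorem inclBF_ba (e : E) :
    inclBF k s t sF tF I (ba k s t I e) =
      ba k (Sum.elim s sF) (Sum.elim t tF) (idealF k s t sF tF I) (Sum.inl e) := by
  rw [ba, inclBF_bqaMk, extendPath_arr, ba]

end NewArrows

section Splitting

variable (k : Type) [CommRing k] {V E : Type} [Fintype V] [DecidableEq V] (s t : E → V)
  {F : Type} [Fintype F] (sF tF : F → V) (I : TwoSidedIdeal (PathAlg k V E s t))

local notation "𝓑" => BQA k s t I
local notation "𝓑F" => BQAF k s t sF tF I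
local notation "𝓜" => TrivSqZeroExt (𝓑F × 𝓑) (𝓑F ⊗[k] 𝓑)
local notation "vF" => bv k (Sum.elim s sF) (Sum.elim t tF) (idealF k s t sF tF I)
local notation "aF" => ba k (Sum.elim s sF) (Sum.elim t tF) (idealF k s t sF tF I)

/-- `r` and `D` are the two components of one algebra morphism `B_F → (B_F × B) ⋉ (B_F ⊗ B)`
into a square-zero extension, given on generators: a new arrow `a` goes to
`(a, 0) + ε (a ⊗ e_{s(a)})`. -/
def splitGen : E ⊕ F → 𝓜
  | .inl e => .inl (aF (.inl e), ba k s t I e)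
  | .inr a => .inl (aF (.inr a), 0) + .inr (aF (.inr a) ⊗ₜ bv k s t I (sF a))

def splitPathHom : PathAlg k V (E ⊕ F) (Sum.elim s sF) (Sum.elim t tF) →ₐ[k] 𝓜 :=
  PathAlg.lift (fun i => .inl (vF i, bv k s t I i)) (splitGen k s t sF tF I)
    (fun i j => by
      rw [TrivSqZeroExt.inl_mul_inl, Prod.mk_mul_mk, bv_mul_bv, bv_mul_bv]
      split_ifs <;> rfl)
    (by rw [← TrivSqZeroExt.inl_sum, ← prod_mk_sum, sum_bv, sum_bv]; rfl)
    (fun a => by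
      have := bv_mul_ba k _ _ (idealF k s t sF tF I) a
      rcases a with e | a <;>
        simp_all [splitGen, mul_add, TrivSqZeroExt.inl_mul_inl, TrivSqZeroExt.inl_mul_inr,
          TensorProduct.prod_smul_eq, Algebra.TensorProduct.tmul_mul_tmul, bv_mul_ba])
    (fun a => by
      have := ba_mul_bv k _ _ (idealF k s t sF tF I) a
      rcases a with e | a <;>
        simp_all [splitGen, add_mul, TrivSqZeroExt.inl_mul_inl, TrivSqZeroExt.inr_mul_inl,
          TensorProduct.op_prod_smul_eq, Algebra.TensorProduct.tmul_mul_tmul, ba_mul_bv, bv_mul_bv])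

theorem splitPathHom_extendPath (x : PathAlg k V E s t) :
    splitPathHom k s t sF tF I (extendPath k s t sF tF x) =
      .inl (bqaMk _ _ _ (idealF k s t sF tF I) (extendPath k s t sF tF x), bqaMk k s t I x) := by
  have : (splitPathHom k s t sF tF I).comp (extendPath k s t sF tF) =
      (TrivSqZeroExt.inlAlgHom k _ _).comp
        (((bqaMk _ _ _ (idealF k s t sF tF I)).comp (extendPath k s t sF tF)).prod
          (bqaMk k s t I)) := by
    refine PathAlg.hom_ext (fun i => ?_) (fun e => ?_)
    · simp [extendPath_vtx, splitPathHom, bv]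
    · simp [extendPath_arr, splitPathHom, splitGen, ba]
  exact AlgHom.congr_fun this x

def splitHom : 𝓑F →ₐ[k] 𝓜 :=
  BQA.lift (splitPathHom k s t sF tF I) fun x hx => by
    refine (TwoSidedIdeal.mem_ker _).1 (TwoSidedIdeal.mem_span_iff.1 hx _ ?_)
    rintro _ ⟨x, hx, rfl⟩
    rw [SetLike.mem_coe, TwoSidedIdeal.mem_ker, splitPathHom_extendPath, bqaMk_eq_zero hx,
      bqaMk_eq_zero (I := idealF k s t sF tF I) (TwoSidedIdeal.subset_span ⟨x, hx, rfl⟩)]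
    rfl

def retractBF : 𝓑F →ₐ[k] 𝓑 :=
  (AlgHom.snd k 𝓑F 𝓑).comp ((TrivSqZeroExt.fstHom k _ _).comp (splitHom k s t sF tF I))

def derivBF : 𝓑F →ₗ[k] 𝓑F ⊗[k] 𝓑 :=
  LinearMap.snd k (𝓑F × 𝓑) (𝓑F ⊗[k] 𝓑) ∘ₗ (splitHom k s t sF tF I).toLinearMap

variable {k s t sF tF I}

theorem derivBF_apply (y : 𝓑F) : derivBF k s t sF tF I y = (splitHom k s t sF tF I y).snd := rfl

theorem splitHom_bv (i : V) : splitHom k s t sF tF I (vF i) = .inl (vF i, bv k s t I i) := by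
  simp [splitHom, splitPathHom, bv]

theorem splitHom_ba (a : E ⊕ F) : splitHom k s t sF tF I (aF a) = splitGen k s t sF tF I a := by
  simp [splitHom, splitPathHom, ba]

theorem splitHom_inclBF (b : 𝓑) :
    splitHom k s t sF tF I (inclBF k s t sF tF I b) = .inl (inclBF k s t sF tF I b, b) := by
  have : (splitHom k s t sF tF I).comp (inclBF k s t sF tF I) =
      (TrivSqZeroExt.inlAlgHom k _ _).comp ((inclBF k s t sF tF I).prod (AlgHom.id k _)) := by
    refine BQA.hom_ext (fun i => ?_) (fun e => ?_)
    · simp [inclBF_bv, splitHom_bv]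
    · simp [inclBF_ba, splitHom_ba, splitGen]
  exact AlgHom.congr_fun this b

theorem splitHom_fst (y : 𝓑F) :
    (splitHom k s t sF tF I y).fst = (y, retractBF k s t sF tF I y) := by
  have : (AlgHom.fst k 𝓑F 𝓑).comp ((TrivSqZeroExt.fstHom k _ _).comp (splitHom k s t sF tF I)) =
      AlgHom.id k 𝓑F := by
    refine BQA.hom_ext (fun i => ?_) (fun a => ?_)
    · simp [splitHom_bv]
    · rcases a with e | a <;> simp [splitHom_ba, splitGen]
  exact Prod.ext (AlgHom.congr_fun this y) rfl

theorem retractBF_inclBF (b : 𝓑) : retractBF k s t sF tF I (inclBF k s t sF tF I b) = b := by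
  simp [retractBF, splitHom_inclBF]

theorem derivBF_inclBF (b : 𝓑) : derivBF k s t sF tF I (inclBF k s t sF tF I b) = 0 := by
  rw [derivBF_apply, splitHom_inclBF, TrivSqZeroExt.snd_inl]

theorem derivBF_mul (x y : 𝓑F) :
    derivBF k s t sF tF I (x * y) =
      (x ⊗ₜ 1) * derivBF k s t sF tF I y +
        derivBF k s t sF tF I x * (1 ⊗ₜ retractBF k s t sF tF I y) := by
  rw [derivBF_apply, derivBF_apply, derivBF_apply, map_mul, TrivSqZeroExt.snd_mul, splitHom_fst,
    splitHom_fst]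
  rfl

open HHlow in
theorem mulIncl_derivBF (y : 𝓑F) :
    mulIncl (inclBF k s t sF tF I) (derivBF k s t sF tF I y) =
      y - inclBF k s t sF tF I (retractBF k s t sF tF I y) := by
  have on_incl (b : 𝓑) :
      mulIncl (inclBF k s t sF tF I) (derivBF k s t sF tF I (inclBF k s t sF tF I b)) =
        inclBF k s t sF tF I b -
          inclBF k s t sF tF I (retractBF k s t sF tF I (inclBF k s t sF tF I b)) := by
    rw [derivBF_inclBF, retractBF_inclBF, map_zero, sub_self]
  induction y using BQA.induction_on with
  | algebraMap c => simpa only [AlgHom.commutes] using on_incl (algebraMap k 𝓑 c)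
  | vertex i => simpa only [inclBF_bv] using on_incl (bv k s t I i)
  | arrow a =>
    rcases a with e | a
    · simpa only [inclBF_ba] using on_incl (ba k s t I e)
    · have := ba_mul_bv k (Sum.elim s sF) (Sum.elim t tF) (idealF k s t sF tF I) (.inr a)
      simp_all [derivBF_apply, retractBF, splitHom_ba, splitGen, inclBF_bv]
  | add x y hx hy => rw [map_add, map_add, hx, hy, map_add, map_add]; abel
  | mul x y hx hy =>
    rw [derivBF_mul, map_add, mulIncl_tmul_one_mul, mulIncl_mul_one_tmul, hx, hy, map_mul, map_mul]
    noncomm_ring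

end Splitting

end QP

section
variable (k : Type) [Field k]
variable {V E : Type} [Fintype V] [DecidableEq V] [Fintype E] (s t : E → V)
variable {F : Type} [Fintype F] (sF tF : F → V)
variable (I : TwoSidedIdeal (QP.PathAlg k V E s t))

theorem H1_homology_coefficient_extension_bijective :
    Function.Bijective
      (HHlow.H1hMap k (QP.BQA k s t I) (QP.BQA k s t I)
        (QP.BQAF k s t sF tF I) (QP.BQAF k s t sF tF I)
        (AlgHom.id k (QP.BQA k s t I)) (QP.inclBF k s t sF tF I)
        (AlgHom.id k (QP.BQA k s t I)) (QP.inclBF k s t sF tF I).toLinearMap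
        (by intro b y; simp [smul_eq_mul, map_mul])
        (by intro b y; simp [MulOpposite.smul_eq_mul_unop, map_mul])) :=
  HHlow.H1hMap_bijective_of_splitting QP.retractBF_inclBF QP.derivBF_inclBF QP.derivBF_mul
    QP.mulIncl_derivBF _ _

end
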